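/- (One-stage selection: demographic parity strictly beats group-oblivious.) Suppose α₁ ≠ 1/2. Let t ∈ ℝ satisfy Φ^c(t) = α₁ (the demographic-parity thresholds t_A = t_B = t), and let (u_A, u_B) be the unique pair with s_A u_A = s_B u_B and p_A·Φ^c(u_A) + p_B·Φ^c(u_B) = α₁ (the group-oblivious thresholds). Then p_A·φ(t)/s_A + p_B·φ(t)/s_B > p_A·φ(u_A)/s_A + p_B·φ(u_B)/s_B; equivalently, the expected quality of a selected candidate μ + (σ_W²/α₁)(p_A φ(t_A)/s_A + p_B φ(t_B)/s_B) is strictly larger under demographic parity than under the group-oblivious selection. -/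

import Mathlib

open MeasureTheory Set

/-- Standard normal density. -/
noncomputable def phi (t : ℝ) : ℝ := Real.exp (-t ^ 2 / 2) / Real.sqrt (2 * Real.pi)

/-- Standard normal CDF. -/
noncomputable def Phi (t : ℝ) : ℝ := ∫ u in Set.Iic t, phi u

/-- Standard normal complementary CDF. -/
noncomputable def Phic (t : ℝ) : ℝ := 1 - Phi t

/-! Write `J_G = Φ(u_G) - Φ(t)`; the budget constraint says `p_A J_A + p_B J_B = 0`.
Since `ψ(u) = φ(u) + t Φ(u)` has derivative `(t - u) φ(u)`, it has a strict maximum at `t`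
(equivalently, `φ ∘ Φ⁻¹` is concave with slope `-t` at `Φ(t)`), so `φ(t) - φ(u_G) ≥ t J_G`, strictly
unless `u_G = t`. Weighting by `p_G / s_G` and using the constraint leaves the cross term
`t p_A J_A (1/s_A - 1/s_B)`. It is nonnegative: `u_A` and `u_B` straddle `t` and are proportional
with ratio `s_A / s_B > 1`, so `u_A` lies on the side of `t` facing `0`, i.e. `t J_A ≤ 0`.
Finally `u_A = u_B = t` would force `t = 0`, hence `α₁ = 1/2`. -/

open Real ProbabilityTheory

lemma phi_eq_gaussianPDFReal : phi = gaussianPDFReal 0 1 := by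
  ext x
  simp [phi, gaussianPDFReal, div_eq_inv_mul]

lemma phi_pos (x : ℝ) : 0 < phi x := by
  unfold phi; positivity

lemma continuous_phi : Continuous phi := by
  unfold phi; fun_prop

lemma integrable_phi : Integrable phi :=
  phi_eq_gaussianPDFReal ▸ integrable_gaussianPDFReal 0 1

lemma integral_phi : ∫ x, phi x = 1 :=
  phi_eq_gaussianPDFReal ▸ integral_gaussianPDFReal_eq_one 0 one_ne_zero

lemma phi_neg (x : ℝ) : phi (-x) = phi x := by
  simp [phi]

lemma Phi_zero : Phi 0 = 1 / 2 := by
  have hsymm : ∫ x in Iic 0, phi x = ∫ x in Ioi 0, phi x := by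
    simpa [phi_neg] using integral_comp_neg_Iic 0 phi
  have hsplit := intervalIntegral.integral_Iic_add_Ioi (b := 0) integrable_phi.integrableOn
    integrable_phi.integrableOn
  rw [integral_phi, ← hsymm] at hsplit
  rw [Phi]
  linarith

lemma hasDerivAt_phi (x : ℝ) : HasDerivAt phi (-x * phi x) x := by
  have h : HasDerivAt (fun y => -y ^ 2 / 2) (-x) x :=
    ((hasDerivAt_pow 2 x).neg.div_const 2).congr_deriv (by push_cast; ring)
  exact (h.exp.div_const (√(2 * π))).congr_deriv (by simp only [phi]; ring)

lemma hasDerivAt_Phi (x : ℝ) : HasDerivAt Phi (phi x) x := by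
  have hPhi : Phi = fun y => Phi 0 + ∫ u in 0..y, phi u := by
    ext y
    rw [← intervalIntegral.integral_Iic_sub_Iic integrable_phi.integrableOn
      integrable_phi.integrableOn, Phi, Phi]
    ring
  rw [hPhi]
  exact ((continuous_phi.integral_hasStrictDerivAt 0 x).hasDerivAt).const_add _

lemma strictMono_Phi : StrictMono Phi :=
  strictMono_of_hasDerivAt_pos hasDerivAt_Phi phi_pos

lemma phi_add_mul_Phi_lt {t u : ℝ} (h : u ≠ t) : phi u + t * Phi u < phi t + t * Phi t := by
  set ψ := fun x => phi x + t * Phi x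
  have hψ : ∀ x, HasDerivAt ψ ((t - x) * phi x) x := fun x =>
    ((hasDerivAt_phi x).add ((hasDerivAt_Phi x).const_mul t)).congr_deriv (by ring)
  have hcont : Continuous ψ := continuous_iff_continuousAt.2 fun x => (hψ x).continuousAt
  rcases h.lt_or_gt with hlt | hgt
  · refine strictMonoOn_of_hasDerivWithinAt_pos (convex_Iic t) hcont.continuousOn
      (fun x _ => (hψ x).hasDerivWithinAt) (fun x hx => ?_) (mem_Iic.2 hlt.le) self_mem_Iic hlt
    rw [interior_Iic] at hx
    exact mul_pos (sub_pos.2 hx) (phi_pos x)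
  · refine strictAntiOn_of_hasDerivWithinAt_neg (convex_Ici t) hcont.continuousOn
      (fun x _ => (hψ x).hasDerivWithinAt) (fun x hx => ?_) self_mem_Ici (mem_Ici.2 hgt.le) hgt
    rw [interior_Ici] at hx
    exact mul_neg_of_neg_of_pos (sub_neg.2 hx) (phi_pos x)

lemma phi_add_mul_Phi_le (t u : ℝ) : phi u + t * Phi u ≤ phi t + t * Phi t := by
  rcases eq_or_ne u t with rfl | h
  · exact le_rfl
  · exact (phi_add_mul_Phi_lt h).le

lemma weighted_tangent_gap_pos {wA wB t a b : ℝ} (hwA : 0 < wA) (hwB : 0 < wB)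
    (h : a ≠ t ∨ b ≠ t) :
    0 < wA * (phi t + t * Phi t - (phi a + t * Phi a))
      + wB * (phi t + t * Phi t - (phi b + t * Phi b)) := by
  rcases h with h | h
  · exact add_pos_of_pos_of_nonneg (mul_pos hwA (sub_pos.2 (phi_add_mul_Phi_lt h)))
      (mul_nonneg hwB.le (sub_nonneg.2 (phi_add_mul_Phi_le t b)))
  · exact add_pos_of_nonneg_of_pos (mul_nonneg hwA.le (sub_nonneg.2 (phi_add_mul_Phi_le t a)))
      (mul_pos hwB (sub_pos.2 (phi_add_mul_Phi_lt h)))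

lemma sub_mul_sub_nonpos_of_balance {F : ℝ → ℝ} (hF : StrictMono F) {p a b t : ℝ}
    (hp : p ∈ Ioo 0 1) (h : p * (F a - F t) + (1 - p) * (F b - F t) = 0) :
    (a - t) * (b - t) ≤ 0 := by
  obtain ⟨hp0, hp1⟩ := hp
  by_contra! hpos
  rcases mul_pos_iff.1 hpos with ⟨ha, hb⟩ | ⟨ha, hb⟩
  · have := mul_pos hp0 (sub_pos.2 (hF (sub_pos.1 ha)))
    have := mul_pos (sub_pos.2 hp1) (sub_pos.2 (hF (sub_pos.1 hb)))
    linarith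
  · have := mul_pos hp0 (sub_pos.2 (hF (sub_neg.1 ha)))
    have := mul_pos (sub_pos.2 hp1) (sub_pos.2 (hF (sub_neg.1 hb)))
    linarith

lemma mul_sub_nonpos_of_mul_eq_mul {sA sB a b t : ℝ} (hsB : 0 < sB) (hsAB : sB < sA)
    (h : sA * a = sB * b) (hab : (a - t) * (b - t) ≤ 0) : t * (a - t) ≤ 0 := by
  have hid : sB * ((a - t) * (b - t)) = sA * (a - t) ^ 2 + (sA - sB) * (t * (a - t)) := by
    linear_combination (a - t) * h.symm
  nlinarith [sq_nonneg (a - t)]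

lemma mul_sub_nonpos_of_balance {F : ℝ → ℝ} (hF : StrictMono F) {sA sB p a b t : ℝ}
    (hsB : 0 < sB) (hsAB : sB < sA) (hab : sA * a = sB * b) (hp : p ∈ Ioo 0 1)
    (h : p * (F a - F t) + (1 - p) * (F b - F t) = 0) : t * (F a - F t) ≤ 0 := by
  have hta := mul_sub_nonpos_of_mul_eq_mul hsB hsAB hab (sub_mul_sub_nonpos_of_balance hF hp h)
  rcases lt_trichotomy a t with hlt | rfl | hgt
  · exact mul_nonpos_of_nonneg_of_nonpos (nonneg_of_mul_nonpos_left hta (sub_neg.2 hlt))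
      (sub_nonpos.2 (hF hlt).le)
  · simp
  · exact mul_nonpos_of_nonpos_of_nonneg (nonpos_of_mul_nonpos_left hta (sub_pos.2 hgt))
      (sub_nonneg.2 (hF hgt).le)

theorem demographic_parity_beats_group_oblivious_one_stage_general
    (σW σA σB pA α₁ t uA uB : ℝ)
    (hσW : 0 < σW) (hσB : 0 ≤ σB) (hσAB : σB < σA)
    (hpA : pA ∈ Set.Ioo (0 : ℝ) 1)
    (hαhalf : α₁ ≠ 1 / 2)
    (ht : Phic t = α₁)
    (hu : Real.sqrt (σW ^ 2 + σA ^ 2) * uA = Real.sqrt (σW ^ 2 + σB ^ 2) * uB)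
    (hub : pA * Phic uA + (1 - pA) * Phic uB = α₁) :
    pA * phi uA / Real.sqrt (σW ^ 2 + σA ^ 2)
      + (1 - pA) * phi uB / Real.sqrt (σW ^ 2 + σB ^ 2)
    < pA * phi t / Real.sqrt (σW ^ 2 + σA ^ 2)
      + (1 - pA) * phi t / Real.sqrt (σW ^ 2 + σB ^ 2) := by
  set sA := √(σW ^ 2 + σA ^ 2)
  set sB := √(σW ^ 2 + σB ^ 2)
  have hsB : 0 < sB := by positivity
  have hsAB : sB < sA := Real.sqrt_lt_sqrt (by positivity) (by nlinarith)
  have hbalance : pA * (Phi uA - Phi t) + (1 - pA) * (Phi uB - Phi t) = 0 := by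
    unfold Phic at ht hub; linarith
  have hsign : t * (Phi uA - Phi t) ≤ 0 :=
    mul_sub_nonpos_of_balance strictMono_Phi hsB hsAB hu hpA hbalance
  have hmoved : uA ≠ t ∨ uB ≠ t := by
    by_contra! h
    have ht0 : t = 0 := by
      have : (sA - sB) * t = 0 := by rw [h.1, h.2] at hu; linarith
      exact (mul_eq_zero.1 this).resolve_left (sub_ne_zero.2 hsAB.ne')
    exact hαhalf (by rw [← ht, ht0, Phic, Phi_zero]; norm_num)
  have hgap := weighted_tangent_gap_pos (div_pos hpA.1 (hsB.trans hsAB))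
    (div_pos (sub_pos.2 hpA.2) hsB) hmoved
  have hcross : 0 ≤ pA * (t * (Phi uA - Phi t)) * (1 / sA - 1 / sB) :=
    mul_nonneg_of_nonpos_of_nonpos (mul_nonpos_of_nonneg_of_nonpos hpA.1.le hsign)
      (sub_nonpos.2 (one_div_le_one_div_of_le hsB hsAB.le))
  linear_combination hgap + hcross - (t / sB) * hbalance

/-- One-stage selection: if `α₁ ≠ 1/2`, the demographic-parity thresholds
`t_A = t_B = t` (with `Φᶜ(t) = α₁`) yield a strictly larger value of
`p_A φ(t_A)/s_A + p_B φ(t_B)/s_B` — hence a strictly larger expected quality of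
a selected candidate — than the group-oblivious thresholds `(u_A, u_B)`. -/
theorem demographic_parity_beats_group_oblivious_one_stage
    (μ σW σA σB pA α₁ t uA uB : ℝ)
    (hσW : 0 < σW) (hσB : 0 ≤ σB) (hσAB : σB < σA)
    (hpA : pA ∈ Set.Ioo (0 : ℝ) 1) (hα : α₁ ∈ Set.Ioo (0 : ℝ) 1)
    (hαhalf : α₁ ≠ 1 / 2)
    (ht : Phic t = α₁)
    (hu : Real.sqrt (σW ^ 2 + σA ^ 2) * uA = Real.sqrt (σW ^ 2 + σB ^ 2) * uB)
    (hub : pA * Phic uA + (1 - pA) * Phic uB = α₁) :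
    pA * phi uA / Real.sqrt (σW ^ 2 + σA ^ 2)
      + (1 - pA) * phi uB / Real.sqrt (σW ^ 2 + σB ^ 2)
    < pA * phi t / Real.sqrt (σW ^ 2 + σA ^ 2)
      + (1 - pA) * phi t / Real.sqrt (σW ^ 2 + σB ^ 2) :=
  demographic_parity_beats_group_oblivious_one_stage_general σW σA σB pA α₁ t uA uB hσW hσB hσAB hpA
    hαhalf ht hu hub
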